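/- arXiv:1705.03624 — 3 statements merged into one kernel-verified Lean document; each statement's English description precedes it below -/
import Mathlib

section
/- Let r ≥ 2. The matroid M_r has r pairwise disjoint bases, namely the sets B_j = {v_1^j, v_2^j, …, v_{r−1}^j, w_j} for j = 1, …, r. -/
/-- Independence in the matroid `M_r` (ground set `Fin r × Fin r`; `(i,j)` is `v_{i+1}^{j+1}`
for `i < r-1` and `w_{j+1}` for `i = r-1`). -/
def MrIndep (r : ℕ) (A : Finset (Fin r × Fin r)) : Prop :=
  A.card ≤ r ∧ ∀ i : Fin r, (i : ℕ) < r - 1 → (A.filter (fun p => p.1 = i)).card ≤ 1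

/-- The `j`-th basis `B_j = {v_1^j, …, v_{r-1}^j, w_j}`, i.e. the `j`-th column. -/
def MrB (r : ℕ) (j : Fin r) : Finset (Fin r × Fin r) :=
  Finset.univ.image (fun i : Fin r => (i, j))

section

variable {r : ℕ}

lemma MrB_eq_univ_product (j : Fin r) : MrB r j = Finset.univ ×ˢ {j} := by
  ext ⟨i, k⟩
  simp [MrB, eq_comm]

lemma mem_MrB {j : Fin r} {p : Fin r × Fin r} : p ∈ MrB r j ↔ p.2 = j := by
  rw [MrB_eq_univ_product, Finset.mem_product, Finset.mem_singleton]
  exact and_iff_right (Finset.mem_univ _)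

lemma card_MrB (j : Fin r) : (MrB r j).card = r := by
  simp [MrB_eq_univ_product]

lemma filter_fst_MrB (i j : Fin r) : (MrB r j).filter (fun p => p.1 = i) = {(i, j)} := by
  ext ⟨i', k⟩
  simp [mem_MrB, and_comm]

lemma mrIndep_MrB (j : Fin r) : MrIndep r (MrB r j) :=
  ⟨(card_MrB j).le, fun i _ => by rw [filter_fst_MrB, Finset.card_singleton]⟩

lemma eq_MrB_of_mrIndep_of_MrB_subset {j : Fin r} {A : Finset (Fin r × Fin r)}
    (hA : MrIndep r A) (hsub : MrB r j ⊆ A) : A = MrB r j :=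
  (Finset.eq_of_subset_of_card_le hsub (hA.1.trans (card_MrB j).ge)).symm

lemma disjoint_MrB {j j' : Fin r} (h : j ≠ j') : Disjoint (MrB r j) (MrB r j') := by
  rw [MrB_eq_univ_product, MrB_eq_univ_product]
  exact Finset.disjoint_product.mpr (Or.inr (Finset.disjoint_singleton.mpr h))

end

theorem stmt1_general (r : ℕ) :
    (∀ j : Fin r, MrIndep r (MrB r j) ∧ (MrB r j).card = r ∧
      (∀ A : Finset (Fin r × Fin r), MrIndep r A → MrB r j ⊆ A → A = MrB r j)) ∧
    (∀ j j' : Fin r, j ≠ j' → Disjoint (MrB r j) (MrB r j')) :=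
  ⟨fun j => ⟨mrIndep_MrB j, card_MrB j, fun _ => eq_MrB_of_mrIndep_of_MrB_subset⟩,
    fun _ _ => disjoint_MrB⟩

/-- `M_r` has `r` pairwise disjoint bases `B_j = {v_1^j, …, v_{r-1}^j, w_j}`:
each `B_j` is independent of size `r`, is a maximal independent set, and the `B_j`
are pairwise disjoint. -/
theorem stmt1 (r : ℕ) (hr : 2 ≤ r) :
    (∀ j : Fin r, MrIndep r (MrB r j) ∧ (MrB r j).card = r ∧
      (∀ A : Finset (Fin r × Fin r), MrIndep r A → MrB r j ⊆ A → A = MrB r j)) ∧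
    (∀ j j' : Fin r, j ≠ j' → Disjoint (MrB r j) (MrB r j')) :=
  stmt1_general r
end

section
/- Let r ≥ 3. In the 2-fold deleted join (M_r)^{*2}_Δ, the facets of dimension 2r−2 (cardinality 2r−1) are exactly the faces obtained by choosing one row i ∈ {1,2}, taking all r vertices {w_1,…,w_r} of the last block in row i, and in the other row choosing one vertex from each of the sets {v_j^1,…,v_j^r} for j = 1,…,r−1. In particular the number of facets of dimension 2r−2 equals 2·r^{r−1}. -/
/-- A face of the `2`-fold deleted join `(M_r)^{*2}_Δ`: a pair of disjoint independent sets. -/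
def Face2 (r : ℕ) (p : Finset (Fin r × Fin r) × Finset (Fin r × Fin r)) : Prop :=
  MrIndep r p.1 ∧ MrIndep r p.2 ∧ Disjoint p.1 p.2

/-- A facet of `(M_r)^{*2}_Δ`: a face maximal under componentwise inclusion. -/
def Facet2 (r : ℕ) (p : Finset (Fin r × Fin r) × Finset (Fin r × Fin r)) : Prop :=
  Face2 r p ∧ ∀ q, Face2 r q → p.1 ⊆ q.1 → p.2 ⊆ q.2 → q = p

/-- The last block `{w_1, …, w_r}` of the ground set. -/
def lastBlock (r : ℕ) : Finset (Fin r × Fin r) :=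
  Finset.univ.filter (fun p => (p.1 : ℕ) = r - 1)

/-- The face consisting of one chosen vertex `(j, f j)` in each of the first `r-1` blocks. -/
def blockChoice (r : ℕ) (f : Fin r → Fin r) : Finset (Fin r × Fin r) :=
  (Finset.univ.filter (fun j : Fin r => (j : ℕ) < r - 1)).image (fun j => (j, f j))

/-!
Both parts of a face are independent, hence have at most `r` elements, so a face of cardinality
`2r - 1` has one part of size `r` and one of size `r - 1`. Maximality forces the smaller part to
meet every rank-one block `{v_j^1, …, v_j^r}`: the other part holds at most one vertex of that
block, and any other vertex of it could be added. Having `r - 1` elements, the smaller part is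
then a transversal of the first `r - 1` blocks. Maximality also forces every `w_k` into the face,
and the transversal contains none, so the larger part is `{w_1, …, w_r}`. Conversely such a pair
cannot be enlarged. Transversals correspond to the `r ^ (r - 1)` choices of one vertex per block,
and the choice of the row carrying `{w_1, …, w_r}` gives the factor `2`.
-/

open Finset

section Blocks

variable {r : ℕ}

lemma mem_lastBlock {x : Fin r × Fin r} : x ∈ lastBlock r ↔ (x.1 : ℕ) = r - 1 := by
  simp [lastBlock]

lemma mem_blockChoice {f : Fin r → Fin r} {x : Fin r × Fin r} :
    x ∈ blockChoice r f ↔ (x.1 : ℕ) < r - 1 ∧ x.2 = f x.1 := by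
  simp only [blockChoice, mem_image, mem_filter, mem_univ, true_and]
  constructor
  · rintro ⟨j, hj, rfl⟩
    exact ⟨hj, rfl⟩
  · rintro ⟨hj, h⟩
    exact ⟨x.1, hj, Prod.ext rfl h.symm⟩

lemma card_lastBlock : #(lastBlock r) = r := by
  obtain _ | n := r
  · rfl
  · have : lastBlock (n + 1) = {Fin.last n} ×ˢ univ := by
      ext x
      simp only [mem_lastBlock, mem_product, mem_singleton, mem_univ, and_true, Fin.ext_iff,
        Fin.val_last]
      omega
    simp [this]

lemma card_blockChoice (f : Fin r → Fin r) : #(blockChoice r f) = r - 1 := by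
  rw [blockChoice, card_image_of_injective _ fun a b h => congrArg Prod.fst h,
    Fin.card_filter_val_lt]
  omega

lemma disjoint_lastBlock_blockChoice (f : Fin r → Fin r) :
    Disjoint (lastBlock r) (blockChoice r f) := by
  rw [disjoint_left]
  intro x h1 h2
  rw [mem_lastBlock] at h1
  rw [mem_blockChoice] at h2
  omega

lemma lastBlock_ne_blockChoice (hr : 0 < r) (f : Fin r → Fin r) :
    lastBlock r ≠ blockChoice r f := by
  intro h
  have := congrArg card h
  rw [card_lastBlock, card_blockChoice] at this
  omega

lemma ncard_range_blockChoice : (Set.range (blockChoice r)).ncard = r ^ (r - 1) := by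
  let transversal (g : {j : Fin r // (j : ℕ) < r - 1} → Fin r) : Finset (Fin r × Fin r) :=
    univ.image fun j => (j.1, g j)
  have hfactor : blockChoice r = transversal ∘ fun f j => f j.1 := by
    funext f
    ext x
    simp only [Function.comp_apply, transversal, mem_image, mem_univ, true_and, mem_blockChoice]
    constructor
    · rintro ⟨hx, h⟩
      exact ⟨⟨x.1, hx⟩, Prod.ext rfl h.symm⟩
    · rintro ⟨j, rfl⟩
      exact ⟨j.2, rfl⟩
  have hrestrict :
      Function.Surjective fun (f : Fin r → Fin r) (j : {j : Fin r // (j : ℕ) < r - 1}) => f j.1 :=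
    fun g => ⟨Function.extend Subtype.val g id,
      funext fun j => Subtype.val_injective.extend_apply g id j⟩
  have htransversal : transversal.Injective := fun g g' h => funext fun j => by
    have : (j.1, g j) ∈ transversal g' := h ▸ mem_image_of_mem _ (mem_univ j)
    obtain ⟨i, -, hi⟩ := mem_image.1 this
    obtain rfl : i = j := Subtype.ext (congrArg Prod.fst hi)
    exact (congrArg Prod.snd hi).symm
  rw [hfactor, hrestrict.range_comp, Set.ncard_range_of_injective htransversal,
    Nat.card_eq_fintype_card, Fintype.card_fun, Fintype.card_subtype, Fin.card_filter_val_lt,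
    Fintype.card_fin, min_eq_right (Nat.sub_le r 1)]

end Blocks

section Independence

variable {r : ℕ}

lemma mrIndep_lastBlock : MrIndep r (lastBlock r) := by
  refine ⟨card_lastBlock.le, fun i hi => ?_⟩
  rw [filter_eq_empty_iff.2 fun x hx hxi => by rw [mem_lastBlock, hxi] at hx; omega, card_empty]
  exact zero_le_one

lemma mrIndep_blockChoice (f : Fin r → Fin r) : MrIndep r (blockChoice r f) := by
  refine ⟨(card_blockChoice f).trans_le (Nat.sub_le r 1), fun i _ => card_le_one.2 ?_⟩
  intro a ha b hb
  simp only [mem_filter, mem_blockChoice] at ha hb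
  exact Prod.ext (ha.2.trans hb.2.symm) (by rw [ha.1.2, hb.1.2, ha.2, hb.2])

lemma MrIndep.insert {A : Finset (Fin r × Fin r)} (hA : MrIndep r A) (hcard : #A < r)
    {x : Fin r × Fin r} (hrow : (x.1 : ℕ) < r - 1 → ∀ y ∈ A, y.1 ≠ x.1) :
    MrIndep r (insert x A) := by
  refine ⟨(card_insert_le x A).trans hcard, fun i hi => ?_⟩
  rw [filter_insert]
  split_ifs with hxi
  · subst hxi
    rw [filter_eq_empty_iff.2 (hrow hi)]
    simp
  · exact hA.2 i hi

end Independence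

section Facets

variable {r : ℕ} {p : Finset (Fin r × Fin r) × Finset (Fin r × Fin r)}

lemma Face2.swap (h : Face2 r p) : Face2 r p.swap :=
  ⟨h.2.1, h.1, h.2.2.symm⟩

lemma Facet2.swap (h : Facet2 r p) : Facet2 r p.swap :=
  ⟨h.1.swap, fun q hq h1 h2 => by rw [← h.2 q.swap hq.swap h2 h1, Prod.swap_swap]⟩

lemma Facet2.not_mrIndep_insert (h : Facet2 r p) {x : Fin r × Fin r} (hx1 : x ∉ p.1)
    (hx2 : x ∉ p.2) : ¬ MrIndep r (insert x p.1) := by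
  intro hind
  have hface : Face2 r (insert x p.1, p.2) :=
    ⟨hind, h.1.2.1, disjoint_insert_left.2 ⟨hx2, h.1.2.2⟩⟩
  have heq : insert x p.1 = p.1 := congrArg Prod.fst (h.2 _ hface (subset_insert x p.1) subset_rfl)
  exact hx1 (heq ▸ mem_insert_self x p.1)

lemma Facet2.mem_of_row_eq_last (h : Facet2 r p) (hcard : #p.1 < r) {x : Fin r × Fin r}
    (hx : (x.1 : ℕ) = r - 1) : x ∈ p.1 ∨ x ∈ p.2 := by
  by_contra! hx'
  exact h.not_mrIndep_insert hx'.1 hx'.2 (h.1.1.insert hcard fun _ => by omega)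

lemma Facet2.exists_mem_row (h : Facet2 r p) (hcard : #p.1 < r) {j : Fin r}
    (hj : (j : ℕ) < r - 1) : ∃ k, (j, k) ∈ p.1 := by
  by_contra! hrow
  obtain ⟨k, hk⟩ : ∃ k : Fin r, (j, k) ∉ p.2 := by
    -- `r ≥ 2`, so the row holds the distinct vertices `(j, 0)`, `(j, 1)`; `p.2` has at most one
    by_contra! hall
    have := card_le_one.1 (h.1.2.1.2 j hj) (j, ⟨0, by omega⟩) (mem_filter.2 ⟨hall _, rfl⟩)
      (j, ⟨1, by omega⟩) (mem_filter.2 ⟨hall _, rfl⟩)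
    simp at this
  refine h.not_mrIndep_insert (hrow k) hk (h.1.1.insert hcard fun _ y hy hyj => hrow y.2 ?_)
  rwa [show (j, y.2) = y from Prod.ext hyj.symm rfl]

lemma Facet2.eq_lastBlock_blockChoice (hr : 0 < r) (h : Facet2 r p) (h1 : #p.1 = r)
    (h2 : #p.2 = r - 1) : ∃ f, p.1 = lastBlock r ∧ p.2 = blockChoice r f := by
  have hs := h.swap
  have h2lt : #p.2 < r := by omega
  have hrow : ∀ j : Fin r, ∃ k, (j : ℕ) < r - 1 → (j, k) ∈ p.2 := fun j =>
    if hj : (j : ℕ) < r - 1 then (hs.exists_mem_row h2lt hj).imp fun _ hk _ => hk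
    else ⟨j, fun hj' => absurd hj' hj⟩
  choose f hf using hrow
  have hB : p.2 = blockChoice r f := by
    refine (eq_of_subset_of_card_le (fun x hx => ?_) (by rw [h2, card_blockChoice])).symm
    obtain ⟨hx1, hx2⟩ := mem_blockChoice.1 hx
    have := hf x.1 hx1
    rwa [← hx2] at this
  have hA : lastBlock r ⊆ p.1 := fun x hx =>
    (hs.mem_of_row_eq_last h2lt (mem_lastBlock.1 hx)).resolve_left fun hx2 =>
      disjoint_left.1 (disjoint_lastBlock_blockChoice f) hx (hB ▸ hx2)
  exact ⟨f, (eq_of_subset_of_card_le hA (by rw [h1, card_lastBlock])).symm, hB⟩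

lemma facet2_lastBlock_blockChoice (f : Fin r → Fin r) :
    Facet2 r (lastBlock r, blockChoice r f) := by
  refine ⟨⟨mrIndep_lastBlock, mrIndep_blockChoice f, disjoint_lastBlock_blockChoice f⟩, ?_⟩
  rintro ⟨A, B⟩ ⟨hA, hB, hAB⟩ (h1 : lastBlock r ⊆ A) (h2 : blockChoice r f ⊆ B)
  have hA' : A = lastBlock r := (eq_of_subset_of_card_le h1 (card_lastBlock ▸ hA.1)).symm
  refine Prod.ext hA' (Subset.antisymm (fun x hx => ?_) h2)
  have hx1 : (x.1 : ℕ) < r - 1 := by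
    have : x ∉ lastBlock r := hA' ▸ disjoint_right.1 hAB hx
    rw [mem_lastBlock] at this
    have := x.1.isLt
    omega
  have hfx : (x.1, f x.1) ∈ B := h2 (mem_blockChoice.2 ⟨hx1, rfl⟩)
  rw [card_le_one.1 (hB.2 x.1 hx1) x (mem_filter.2 ⟨hx, rfl⟩) _ (mem_filter.2 ⟨hfx, rfl⟩)]
  exact mem_blockChoice.2 ⟨hx1, rfl⟩

lemma facet2_and_card_eq_iff (hr : 0 < r) :
    (Facet2 r p ∧ #p.1 + #p.2 = 2 * r - 1) ↔
      ∃ f : Fin r → Fin r, (p.1 = lastBlock r ∧ p.2 = blockChoice r f) ∨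
        (p.2 = lastBlock r ∧ p.1 = blockChoice r f) := by
  obtain ⟨A, B⟩ := p
  dsimp only
  constructor
  · rintro ⟨h, hcard⟩
    have hA : #A ≤ r := h.1.1.1
    have hB : #B ≤ r := h.1.2.1.1
    by_cases hAr : #A = r
    · obtain ⟨f, hf⟩ := h.eq_lastBlock_blockChoice hr hAr (by dsimp only; omega)
      exact ⟨f, Or.inl hf⟩
    · obtain ⟨f, hf⟩ :=
        h.swap.eq_lastBlock_blockChoice hr (show #B = r by omega) (show #A = r - 1 by omega)
      exact ⟨f, Or.inr hf⟩
  · rintro ⟨f, ⟨rfl, rfl⟩ | ⟨rfl, rfl⟩⟩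
    · exact ⟨facet2_lastBlock_blockChoice f, by rw [card_lastBlock, card_blockChoice]; omega⟩
    · exact ⟨(facet2_lastBlock_blockChoice f).swap,
        by rw [card_lastBlock, card_blockChoice]; omega⟩

end Facets

/-- The facets of `(M_r)^{*2}_Δ` of dimension `2r-2` (cardinality `2r-1`) are exactly the
faces with all of `{w_1, …, w_r}` in one row and one vertex from each of the first `r-1`
blocks in the other row; there are `2 ⬝ r^{r-1}` of them. -/
theorem stmt5 (r : ℕ) (hr : 3 ≤ r) :
    (∀ p : Finset (Fin r × Fin r) × Finset (Fin r × Fin r),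
      (Facet2 r p ∧ p.1.card + p.2.card = 2 * r - 1) ↔
      (∃ f : Fin r → Fin r,
        (p.1 = lastBlock r ∧ p.2 = blockChoice r f) ∨
        (p.2 = lastBlock r ∧ p.1 = blockChoice r f))) ∧
    {p : Finset (Fin r × Fin r) × Finset (Fin r × Fin r) |
      Facet2 r p ∧ p.1.card + p.2.card = 2 * r - 1}.ncard = 2 * r ^ (r - 1) := by
  have hr0 : 0 < r := by omega
  refine ⟨fun p => facet2_and_card_eq_iff hr0, ?_⟩
  set T := Prod.mk (lastBlock r) '' Set.range (blockChoice r)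
  have hS : {p : Finset (Fin r × Fin r) × Finset (Fin r × Fin r) |
      Facet2 r p ∧ #p.1 + #p.2 = 2 * r - 1} = T ∪ Prod.swap '' T := by
    ext ⟨A, B⟩
    simp only [Set.mem_ofPred_eq, facet2_and_card_eq_iff hr0, Set.mem_union, Set.mem_image,
      Set.mem_range, T, exists_exists_eq_and, Prod.swap_prod_mk, Prod.mk.injEq, exists_or]
    exact or_congr (exists_congr fun _ => and_congr eq_comm eq_comm)
      (exists_congr fun _ => and_comm.trans (and_congr eq_comm eq_comm))
  have hdisj : Disjoint T (Prod.swap '' T) := by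
    rw [Set.disjoint_left]
    rintro _ ⟨_, _, rfl⟩ ⟨_, ⟨_, ⟨f, rfl⟩, rfl⟩, h⟩
    exact lastBlock_ne_blockChoice hr0 f (congrArg Prod.fst h).symm
  rw [hS, Set.ncard_union_eq hdisj, Set.ncard_image_of_injective _ Prod.swap_injective,
    Set.ncard_image_of_injective _ (Prod.mk_right_injective _), ncard_range_blockChoice]
  ring
end

section
/- Let r ≥ 2, let E_1', ..., E_r' be pairwise disjoint blocks of size r+1, and let M_r' be the (r−1)-skeleton (i.e., the rank-r truncation) of the direct sum matroid U_{1,r+1}(E_1') ⊕ ⋯ ⊕ U_{1,r+1}(E_{r−1}') ⊕ U_{r+1,r+1}(E_r'). Then M_r' is a matroid of rank r with r+1 pairwise disjoint bases, and every facet of the 2-fold deleted join (M_r')^{*2}_Δ has cardinality exactly 2r (i.e., (M_r')^{*2}_Δ is a pure complex of dimension 2r−1). -/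
/-- Independence in the matroid `M_r'` on ground set `Fin r × Fin (r+1)` (the element
`(i,j)` is `v_{i+1}^{j+1}` for `i < r-1` and `w_{j+1}` for `i = r-1`; each block now has
`r+1` elements): at most `r` elements in total and at most one from each of the first
`r-1` blocks. -/
def MrIndep' (r : ℕ) (A : Finset (Fin r × Fin (r + 1))) : Prop :=
  A.card ≤ r ∧ ∀ i : Fin r, (i : ℕ) < r - 1 → (A.filter (fun p => p.1 = i)).card ≤ 1

lemma mrSub {r : ℕ} {A B : Finset (Fin r × Fin (r + 1))} (hBA : B ⊆ A)
    (hA : MrIndep' r A) : MrIndep' r B :=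
  ⟨le_trans (Finset.card_le_card hBA) hA.1,
   fun i hi => le_trans (Finset.card_le_card (Finset.filter_subset_filter _ hBA)) (hA.2 i hi)⟩

lemma mrInsert {r : ℕ} {A : Finset (Fin r × Fin (r + 1))} {e : Fin r × Fin (r + 1)}
    (hA : MrIndep' r A) (hcard : A.card < r)
    (he : ¬ ((e.1 : ℕ) < r - 1) ∨ A.filter (fun p => p.1 = e.1) = ∅) :
    MrIndep' r (insert e A) := by
  constructor
  · exact le_trans (Finset.card_insert_le _ _) hcard
  · intro i hi
    rw [Finset.filter_insert]
    split_ifs with h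
    · rcases he with h1 | h2
      · exact absurd (h ▸ hi) h1
      · rw [← h] at *
        rw [h2]
        simp
    · exact hA.2 i hi

lemma mrTwo {r : ℕ} {B : Finset (Fin r × Fin (r + 1))} (hB : MrIndep' r B)
    {a e : Fin r × Fin (r + 1)} (ha : a ∈ B) (he : e ∈ B) (hi : (a.1 : ℕ) < r - 1)
    (hfst : a.1 = e.1) : a = e := by
  have h1 := hB.2 a.1 hi
  have := Finset.card_le_one.mp h1 a (Finset.mem_filter.mpr ⟨ha, rfl⟩)
    e (Finset.mem_filter.mpr ⟨he, hfst.symm⟩)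
  exact this

lemma mrExch {r : ℕ} (A B : Finset (Fin r × Fin (r + 1)))
    (hA : MrIndep' r A) (hB : MrIndep' r B) (hcard : A.card < B.card) :
    ∃ e ∈ B, e ∉ A ∧ MrIndep' r (insert e A) := by
  by_contra hcon
  push_neg at hcon
  have key : ∀ e ∈ B \ A, ∃ a, a ∈ A \ B ∧ a.1 = e.1 ∧ (e.1 : ℕ) < r - 1 := by
    intro e he
    rw [Finset.mem_sdiff] at he
    have h1 : (e.1 : ℕ) < r - 1 ∧ (A.filter (fun p => p.1 = e.1)).Nonempty := by
      by_contra h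
      apply hcon e he.1 he.2
      apply mrInsert hA (lt_of_lt_of_le hcard hB.1)
      by_cases h1 : (e.1 : ℕ) < r - 1
      · right
        rw [← Finset.not_nonempty_iff_eq_empty]
        intro hne
        exact h ⟨h1, hne⟩
      · left; exact h1
    obtain ⟨a, ha⟩ := h1.2
    rw [Finset.mem_filter] at ha
    refine ⟨a, Finset.mem_sdiff.mpr ⟨ha.1, ?_⟩, ha.2, h1.1⟩
    intro haB
    have : a = e := mrTwo hB haB he.1 (ha.2 ▸ h1.1) (ha.2 ▸ rfl)
    exact he.2 (this ▸ ha.1)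
  have key' : ∀ e, ∃ a, e ∈ B \ A → a ∈ A \ B ∧ a.1 = e.1 ∧ (e.1 : ℕ) < r - 1 := by
    intro e
    by_cases h : e ∈ B \ A
    · obtain ⟨a, ha⟩ := key e h; exact ⟨a, fun _ => ha⟩
    · exact ⟨e, fun h' => absurd h' h⟩
  choose f hf using key'
  have hle : (B \ A).card ≤ (A \ B).card := by
    apply Finset.card_le_card_of_injOn f (fun e he => (hf e he).1)
    intro e he e' he' heq
    rw [Finset.mem_coe] at he he'
    have h1 := hf e he
    have h2 := hf e' he'
    have hfst : e.1 = e'.1 := by rw [← h1.2.1, heq, h2.2.1]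
    have heB := (Finset.mem_sdiff.mp he).1
    have he'B := (Finset.mem_sdiff.mp he').1
    -- need e.1 < r - 1
    exact mrTwo hB heB he'B h1.2.2 hfst
  have h4 : B.card ≤ A.card := by
    have e1 := Finset.card_sdiff_add_card_inter B A
    have e2 := Finset.card_sdiff_add_card_inter A B
    rw [Finset.inter_comm] at e2
    omega
  omega

lemma existsCol {r : ℕ} (hr : 2 ≤ r) (i : Fin r) (B : Finset (Fin r × Fin (r + 1)))
    (hB : (B.filter (fun p => p.1 = i)).card ≤ r) :
    ∃ j : Fin (r + 1), (i, j) ∉ B := by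
  set T := (B.filter (fun p => p.1 = i)).image Prod.snd with hT
  have hTcard : T.card ≤ r := le_trans Finset.card_image_le hB
  have : T ≠ Finset.univ := by
    intro h
    rw [h, Finset.card_univ, Fintype.card_fin] at hTcard
    omega
  have : ¬ ∀ x, x ∈ T := fun h => this (Finset.eq_univ_iff_forall.mpr h)
  push_neg at this
  obtain ⟨j, hj⟩ := this
  refine ⟨j, fun h => hj ?_⟩
  exact Finset.mem_image.mpr ⟨(i, j), Finset.mem_filter.mpr ⟨h, rfl⟩, rfl⟩

lemma extend {r : ℕ} (hr : 2 ≤ r) {A B : Finset (Fin r × Fin (r + 1))}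
    (hA : MrIndep' r A) (hB : MrIndep' r B) (hcard : A.card < r) :
    ∃ e, e ∉ A ∧ e ∉ B ∧ MrIndep' r (insert e A) := by
  have hmain : ∃ i : Fin r, A.filter (fun p => p.1 = i) = ∅ ∧
      (B.filter (fun p => p.1 = i)).card ≤ r := by
    by_cases hall : ∃ i : Fin r, (i : ℕ) < r - 1 ∧ A.filter (fun p => p.1 = i) = ∅
    · obtain ⟨i, hi, hemp⟩ := hall
      exact ⟨i, hemp, le_trans (hB.2 i hi) (by omega)⟩
    · push_neg at hall
      set last : Fin r := ⟨r - 1, by omega⟩ with hlast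
      refine ⟨last, ?_, le_trans (Finset.card_le_card (Finset.filter_subset _ _)) hB.1⟩
      have hsum : A.card = ∑ i : Fin r, (A.filter (fun p => p.1 = i)).card :=
        Finset.card_eq_sum_card_fiberwise (fun x _ => Finset.mem_univ x.1)
      have hsplit : (A.filter (fun p => p.1 = last)).card +
          ∑ i ∈ Finset.univ.erase last, (A.filter (fun p => p.1 = i)).card =
          ∑ i : Fin r, (A.filter (fun p => p.1 = i)).card :=
        Finset.add_sum_erase Finset.univ
          (fun i => (A.filter (fun p => p.1 = i)).card) (Finset.mem_univ last)
      have hlb : Finset.univ.erase last ⊆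
          (Finset.univ.erase last).filter
            (fun i => 1 ≤ (A.filter (fun p => p.1 = i)).card) := by
        intro i hi
        rw [Finset.mem_filter]
        refine ⟨hi, ?_⟩
        have hine := Finset.mem_erase.mp hi
        have hilt : (i : ℕ) < r - 1 := by
          have := i.isLt
          have : (i : ℕ) ≠ r - 1 := fun h => hine.1 (Fin.ext h)
          omega
        have := hall i hilt
        exact Finset.card_pos.mpr this
      have hge : r - 1 ≤ ∑ i ∈ Finset.univ.erase last,
          (A.filter (fun p => p.1 = i)).card := by
        calc r - 1 = (Finset.univ.erase last).card := by
              rw [Finset.card_erase_of_mem (Finset.mem_univ _), Finset.card_univ,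
                Fintype.card_fin]
            _ ≤ ∑ i ∈ Finset.univ.erase last, (A.filter (fun p => p.1 = i)).card := by
              rw [Finset.card_eq_sum_ones]
              exact Finset.sum_le_sum fun i hi => (Finset.mem_filter.mp (hlb hi)).2
      have : (A.filter (fun p => p.1 = last)).card = 0 := by omega
      exact Finset.card_eq_zero.mp this
  obtain ⟨i, hemp, hBc⟩ := hmain
  obtain ⟨j, hj⟩ := existsCol hr i B hBc
  refine ⟨(i, j), ?_, hj, mrInsert hA hcard (Or.inr hemp)⟩
  intro h
  have : (i, j) ∈ A.filter (fun p => p.1 = i) := Finset.mem_filter.mpr ⟨h, rfl⟩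
  rw [hemp] at this
  exact absurd this (Finset.notMem_empty _)

/-- The `j`-th basis `{v_1^j, …, v_{r-1}^j, w_j}` of `M_r'` (the `j`-th column). -/
def MrB' (r : ℕ) (j : Fin (r + 1)) : Finset (Fin r × Fin (r + 1)) :=
  Finset.univ.image (fun i : Fin r => (i, j))

/-- A face of the `2`-fold deleted join `(M_r')^{*2}_Δ`. -/
def Face2' (r : ℕ) (p : Finset (Fin r × Fin (r + 1)) × Finset (Fin r × Fin (r + 1))) :
    Prop :=
  MrIndep' r p.1 ∧ MrIndep' r p.2 ∧ Disjoint p.1 p.2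

/-- A facet of `(M_r')^{*2}_Δ`: a face maximal under componentwise inclusion. -/
def Facet2' (r : ℕ) (p : Finset (Fin r × Fin (r + 1)) × Finset (Fin r × Fin (r + 1))) :
    Prop :=
  Face2' r p ∧ ∀ q, Face2' r q → p.1 ⊆ q.1 → p.2 ⊆ q.2 → q = p

/-- `M_r'` is a matroid of rank `r` (the independence system satisfies the matroid axioms
and its maximal independent sets have size `r`) with `r+1` pairwise disjoint bases, and
every facet of the `2`-fold deleted join `(M_r')^{*2}_Δ` has cardinality exactly `2r`,
i.e. `(M_r')^{*2}_Δ` is pure of dimension `2r-1`. -/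
theorem stmt19 (r : ℕ) (hr : 2 ≤ r) :
    MrIndep' r ∅ ∧
    (∀ A B : Finset (Fin r × Fin (r + 1)), B ⊆ A → MrIndep' r A → MrIndep' r B) ∧
    (∀ A B : Finset (Fin r × Fin (r + 1)), MrIndep' r A → MrIndep' r B →
      A.card < B.card → ∃ e ∈ B, e ∉ A ∧ MrIndep' r (insert e A)) ∧
    (∀ A : Finset (Fin r × Fin (r + 1)), MrIndep' r A → A.card ≤ r) ∧
    (∀ j : Fin (r + 1), MrIndep' r (MrB' r j) ∧ (MrB' r j).card = r ∧
      ∀ A : Finset (Fin r × Fin (r + 1)), MrIndep' r A → MrB' r j ⊆ A → A = MrB' r j) ∧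
    (∀ j j' : Fin (r + 1), j ≠ j' → Disjoint (MrB' r j) (MrB' r j')) ∧
    (∀ p : Finset (Fin r × Fin (r + 1)) × Finset (Fin r × Fin (r + 1)),
      Facet2' r p → p.1.card + p.2.card = 2 * r) := by
  have hBcard : ∀ j : Fin (r + 1), (MrB' r j).card = r := by
    intro j
    rw [MrB', Finset.card_image_of_injective _ (fun a b h => (Prod.mk.injEq _ _ _ _ ▸ h).1),
      Finset.card_univ, Fintype.card_fin]
  have hBindep : ∀ j : Fin (r + 1), MrIndep' r (MrB' r j) := by
    intro j
    refine ⟨(hBcard j).le, fun i _ => ?_⟩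
    have : (MrB' r j).filter (fun p => p.1 = i) ⊆ {(i, j)} := by
      intro p hp
      rw [Finset.mem_filter, MrB', Finset.mem_image] at hp
      obtain ⟨⟨i', _, rfl⟩, h2⟩ := hp
      simp_all
    exact le_trans (Finset.card_le_card this) (by simp)
  refine ⟨⟨by simp, fun i _ => by simp⟩,
    fun A B hBA hA => mrSub hBA hA,
    fun A B hA hB h => mrExch A B hA hB h,
    fun A hA => hA.1, ?_, ?_, ?_⟩
  · intro j
    refine ⟨hBindep j, hBcard j, fun A hA hsub => ?_⟩
    exact (Finset.eq_of_subset_of_card_le hsub (by rw [hBcard]; exact hA.1)).symm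
  · intro j j' hne
    rw [Finset.disjoint_left]
    intro a ha ha'
    rw [MrB', Finset.mem_image] at ha ha'
    obtain ⟨i, _, rfl⟩ := ha
    obtain ⟨i', _, h⟩ := ha'
    exact hne ((Prod.mk.injEq _ _ _ _ ▸ h).2 ▸ rfl)
  · intro p hp
    obtain ⟨⟨h1, h2, h3⟩, hmax⟩ := hp
    have hc1 : p.1.card = r := by
      by_contra h
      have hlt : p.1.card < r := lt_of_le_of_ne h1.1 h
      obtain ⟨e, he1, he2, he3⟩ := extend hr h1 h2 hlt
      have hdisj : Disjoint (insert e p.1) p.2 := by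
        rw [Finset.disjoint_insert_left]
        exact ⟨he2, h3⟩
      have := hmax (insert e p.1, p.2) ⟨he3, h2, hdisj⟩
        (Finset.subset_insert _ _) subset_rfl
      have : insert e p.1 = p.1 := congrArg Prod.fst this
      exact he1 (this ▸ Finset.mem_insert_self e p.1)
    have hc2 : p.2.card = r := by
      by_contra h
      have hlt : p.2.card < r := lt_of_le_of_ne h2.1 h
      obtain ⟨e, he1, he2, he3⟩ := extend hr h2 h1 hlt
      have hdisj : Disjoint p.1 (insert e p.2) := by
        rw [Finset.disjoint_insert_right]
        exact ⟨he2, h3⟩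
      have := hmax (p.1, insert e p.2) ⟨h1, he3, hdisj⟩
        subset_rfl (Finset.subset_insert _ _)
      have : insert e p.2 = p.2 := congrArg Prod.snd this
      exact he1 (this ▸ Finset.mem_insert_self e p.2)
    omega
end
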